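/- If u is a ρ,λ-Catalan word, then applying u to a state of the two-stacks-in-series machine leaves stack 2 and the output unchanged, removes |u|/2 elements from the front of the input, and changes stack 1 by pushing some permutation of those removed elements on top of its prior contents. -/

import Mathlib

namespace TwoStacks

/-- A state of the two-stacks-in-series machine: remaining input,
stack 1, stack 2 (tops at the head), and the output so far. -/
structure St where
  inp : List ℕ
  s1 : List ℕ
  s2 : List ℕ
  out : List ℕ
deriving DecidableEq

/-- The three moves. -/
inductive Mv
  | rho  -- input → stack 1
  | lam  -- stack 1 → stack 2
  | mu   -- stack 2 → output
deriving DecidableEq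

/-- One move of the machine (`none` if the move is not applicable). -/
def step : Mv → St → Option St
  | .rho, ⟨x :: xs, s1, s2, o⟩ => some ⟨xs, x :: s1, s2, o⟩
  | .lam, ⟨i, x :: xs, s2, o⟩ => some ⟨i, xs, x :: s2, o⟩
  | .mu,  ⟨i, s1, x :: xs, o⟩ => some ⟨i, s1, xs, o ++ [x]⟩
  | _, _ => none

/-- Run a word of moves on a state. -/
def run (w : List Mv) (s : St) : Option St :=
  w.foldlM (fun s m => step m s) s

/-- The list 1,2,…,n. -/
def idSeq (n : ℕ) : List ℕ := (List.range n).map (· + 1)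

/-- The one-line notation p(1),…,p(n) (values in {1,…,n}) of a permutation. -/
def permList {n : ℕ} (p : Equiv.Perm (Fin n)) : List ℕ :=
  List.ofFn fun i => (p i : ℕ) + 1

/-- p is achievable: from input 1,…,n some word of moves outputs p(1),…,p(n). -/
def Achievable {n : ℕ} (p : Equiv.Perm (Fin n)) : Prop :=
  ∃ w, run w ⟨idSeq n, [], [], []⟩ = some ⟨[], [], [], permList p⟩

/-- p is sortable: from input p(1),…,p(n) some word of moves outputs 1,…,n. -/
def Sortable {n : ℕ} (p : Equiv.Perm (Fin n)) : Prop :=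
  ∃ w, run w ⟨permList p, [], [], []⟩ = some ⟨[], [], [], idSeq n⟩

/-- A list of (distinct) naturals is achievable as an output. -/
def AchList (l : List ℕ) : Prop :=
  ∃ w, run w ⟨idSeq l.length, [], [], []⟩ = some ⟨[], [], [], l⟩

/-- Standardization (pattern) of a list with distinct entries:
each entry is replaced by its rank (1-based). -/
def std (l : List ℕ) : List ℕ :=
  l.map fun x => (l.filter (· ≤ x)).length

/-- An operation sequence of length 3n: n of each letter, and every
prefix has #ρ ≥ #λ ≥ #μ. -/
def OpSeq (n : ℕ) (w : List Mv) : Prop :=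
  w.length = 3 * n ∧ w.count .rho = n ∧ w.count .lam = n ∧ w.count .mu = n ∧
  ∀ u, u <+: w → u.count .mu ≤ u.count .lam ∧ u.count .lam ≤ u.count .rho

/-- An x,y-Catalan word: word over {x,y} with equally many x's and y's
in which every prefix has at least as many x's as y's. -/
def CatWord (x y : Mv) (w : List Mv) : Prop :=
  (∀ m ∈ w, m = x ∨ m = y) ∧ w.count x = w.count y ∧
  ∀ u, u <+: w → u.count y ≤ u.count x

/-- Two words have the same effect: applied to any state on which both
are applicable, they give the same resulting state. -/
def SameEffect (v v' : List Mv) : Prop :=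
  ∀ s t t', run v s = some t → run v' s = some t' → t = t'

/-- Rank of a letter for the order ρ < λ < μ. -/
def rk : Mv → ℕ
  | .rho => 0
  | .lam => 1
  | .mu => 2

/-- The order ρ < λ < μ on letters. -/
def mlt (a b : Mv) : Prop := rk a < rk b

/-- Lexicographic order on words induced by ρ < λ < μ. -/
def wordLt (v v' : List Mv) : Prop := List.Lex mlt v v'

/-- No entry is immediately followed by its successor. -/
def IncAvoid (l : List ℕ) : Prop :=
  ∀ j (h : j + 1 < l.length), l.get ⟨j + 1, h⟩ ≠ l.get ⟨j, by omega⟩ + 1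

lemma run_cons (m : Mv) (w : List Mv) (s : St) :
    run (m :: w) s = (step m s).bind (run w) := by
  simp [run, List.foldlM_cons, Option.bind_eq_bind]
  rfl

lemma count_rho_add_count_lam (u : List Mv)
    (hmem : ∀ m ∈ u, m = .rho ∨ m = .lam) :
    u.count .rho + u.count .lam = u.length := by
  induction u with
  | nil => simp
  | cons m w ih =>
    have ih' := ih fun x hx => hmem x (by simp [hx])
    rcases hmem m (by simp) with rfl | rfl <;> simp [List.count_cons] <;> omega

lemma aux_effect (u : List Mv) (hmem : ∀ m ∈ u, m = .rho ∨ m = .lam) :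
    ∀ (c base : List ℕ),
      (∀ v, v <+: u → v.count .lam ≤ v.count .rho + c.length) →
      ∀ (inp s2 o : List ℕ) (t : St),
      run u ⟨inp, c ++ base, s2, o⟩ = some t →
      ∃ a b : List ℕ,
        t = ⟨inp.drop (u.count .rho), a ++ base, b ++ s2, o⟩ ∧
        (a ++ b).Perm (inp.take (u.count .rho) ++ c) ∧
        a.length + u.count .lam = u.count .rho + c.length := by
  induction u with
  | nil =>
    intro c base _ inp s2 o t h
    refine ⟨c, [], ?_, by simp, by simp⟩
    simpa [run] using h.symm
  | cons m w ih =>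
    intro c base hpre inp s2 o t h
    have hmem' : ∀ x ∈ w, x = Mv.rho ∨ x = Mv.lam :=
      fun x hx => hmem x (by simp [hx])
    rcases hmem m (by simp) with rfl | rfl
    · -- ρ : input → stack 1
      cases inp with
      | nil => simp [run_cons, step] at h
      | cons x xs =>
        rw [run_cons] at h
        have hstep : step Mv.rho ⟨x :: xs, c ++ base, s2, o⟩ =
            some ⟨xs, (x :: c) ++ base, s2, o⟩ := rfl
        rw [hstep] at h
        replace h : run w _ = some t := h
        have hpre' : ∀ v, v <+: w →
            v.count .lam ≤ v.count .rho + (x :: c).length := by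
          intro v hv
          have := hpre (Mv.rho :: v) (by exact List.cons_prefix_cons.2 ⟨rfl, hv⟩)
          simp [List.count_cons] at this ⊢
          omega
        obtain ⟨a, b, ht, hperm, hlen⟩ := ih hmem' (x :: c) base hpre' xs s2 o t h
        refine ⟨a, b, ?_, ?_, ?_⟩
        · rw [ht]; simp [List.count_cons]
        · have : (xs.take (w.count .rho) ++ x :: c).Perm
              (x :: (xs.take (w.count .rho) ++ c)) := List.perm_middle
          have h2 := hperm.trans this
          simpa [List.count_cons, List.take_succ_cons] using h2
        · simp [List.count_cons] at hlen ⊢; omega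
    · -- λ : stack 1 → stack 2
      cases c with
      | nil =>
        have := hpre [Mv.lam] ⟨w, rfl⟩
        simp [List.count_cons] at this
      | cons y c' =>
        rw [run_cons] at h
        have hstep : step Mv.lam ⟨inp, (y :: c') ++ base, s2, o⟩ =
            some ⟨inp, c' ++ base, y :: s2, o⟩ := rfl
        rw [hstep] at h
        replace h : run w _ = some t := h
        have hpre' : ∀ v, v <+: w →
            v.count .lam ≤ v.count .rho + c'.length := by
          intro v hv
          have := hpre (Mv.lam :: v) (by exact List.cons_prefix_cons.2 ⟨rfl, hv⟩)
          simp [List.count_cons] at this ⊢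
          omega
        obtain ⟨a, b, ht, hperm, hlen⟩ := ih hmem' c' base hpre' inp (y :: s2) o t h
        refine ⟨a, b ++ [y], ?_, ?_, ?_⟩
        · rw [ht]; simp [List.count_cons]
        · have hc : (Mv.lam :: w).count .rho = w.count .rho := by
            simp [List.count_cons]
          rw [hc]
          have h1 : ((a ++ b) ++ [y]).Perm (inp.take (w.count .rho) ++ y :: c') :=
            ((List.perm_append_singleton y (a ++ b)).trans (hperm.cons y)).trans
              List.perm_middle.symm
          rw [← List.append_assoc]
          exact h1
        · simp only [List.count_cons, List.length_cons]
          simp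
          omega

theorem rho_lam_catalan_word_effect (u : List Mv) (hu : CatWord Mv.rho Mv.lam u)
    (s t : St) (h : run u s = some t) :
    t.inp = s.inp.drop (u.length / 2) ∧ t.s1 = s.s1 ∧ t.out = s.out ∧
    ∃ m : List ℕ, m.Perm (s.inp.take (u.length / 2)) ∧ t.s2 = m ++ s.s2 := by
  obtain ⟨hmem, hcnt, hpre⟩ := hu
  obtain ⟨i, s1, s2, o⟩ := s
  have hpre' : ∀ v, v <+: u → v.count .lam ≤ v.count .rho + ([] : List ℕ).length := by
    intro v hv; simpa using hpre v hv
  obtain ⟨a, b, ht, hperm, hlen⟩ :=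
    aux_effect u hmem [] s1 hpre' i s2 o t (by simpa using h)
  have ha : a = [] := by
    have : a.length = 0 := by simp at hlen; omega
    exact List.length_eq_zero_iff.1 this
  subst ha
  have hhalf : u.length / 2 = u.count .rho := by
    have := count_rho_add_count_lam u hmem
    omega
  rw [ht]
  refine ⟨by simp [hhalf], by simp, by simp, b, ?_, by simp⟩
  simpa [hhalf] using hperm

end TwoStacks
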